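/- For every n ≥ 1 there exists a tuple P of n points in [0,1]^2 that attains the minimal L∞ star discrepancy among all n-point tuples in [0,1]^2 (i.e., d*(P) ≤ d*(Q) for every n-point tuple Q in [0,1]^2) and in which no two distinct points share a coordinate value in any dimension: all first coordinates of the points of P are pairwise distinct and all second coordinates are pairwise distinct. -/

import Mathlib

open Finset

noncomputable section

open scoped Classical

/-- Number of points of the tuple `P` lying in the open anchored box `[0,q)`. -/
def openCount {n d : ℕ} (P : Fin n → Fin d → ℝ) (q : Fin d → ℝ) : ℕ :=
  (Finset.univ.filter (fun i : Fin n => ∀ j, P i j < q j)).card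

/-- Number of points of the tuple `P` lying in the closed anchored box `[0,q]`. -/
def closedCount {n d : ℕ} (P : Fin n → Fin d → ℝ) (q : Fin d → ℝ) : ℕ :=
  (Finset.univ.filter (fun i : Fin n => ∀ j, P i j ≤ q j)).card

/-- Open local discrepancy `δ(P,q) = ∏ q_j − #{i : x⁽ⁱ⁾ ∈ [0,q)}/n`. -/
def openDisc {n d : ℕ} (P : Fin n → Fin d → ℝ) (q : Fin d → ℝ) : ℝ :=
  (∏ j, q j) - (openCount P q : ℝ) / n

/-- Closed local discrepancy `δ̄(P,q) = #{i : x⁽ⁱ⁾ ∈ [0,q]}/n − ∏ q_j`. -/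
def closedDisc {n d : ℕ} (P : Fin n → Fin d → ℝ) (q : Fin d → ℝ) : ℝ :=
  (closedCount P q : ℝ) / n - ∏ j, q j

/-- `max(δ(P,q), δ̄(P,q))`. -/
def localDisc {n d : ℕ} (P : Fin n → Fin d → ℝ) (q : Fin d → ℝ) : ℝ :=
  max (openDisc P q) (closedDisc P q)

/-- The L∞ star discrepancy `d*(P) = sup_{q ∈ [0,1]^d} max(δ(P,q), δ̄(P,q))`. -/
def starDisc {n d : ℕ} (P : Fin n → Fin d → ℝ) : ℝ :=
  sSup {r : ℝ | ∃ q : Fin d → ℝ, (∀ j, q j ∈ Set.Icc (0:ℝ) 1) ∧ r = localDisc P q}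

/-!
The star discrepancy is Lipschitz in the points, so it attains its minimum on the compact set of
tuples in the unit cube; among the minimizers take one with the most distinct coordinate values.
If two points `r`, `s` share their `k`-th coordinate, then in the plane one of them, say `r`, also
dominates the other in the remaining coordinate. Shifting `r` in direction `k` by at most `1/n` to
a fresh value does not increase the discrepancy, since every anchored box that `r` leaves or enters
is matched by a box of volume within `1/n` whose count differs by `s`. This contradicts the choice.
-/

section Counting

variable {α : Type*} [Fintype α] {p p' : α → Prop} [DecidablePred p] [DecidablePred p']

lemma card_filter_le_card_filter (h : ∀ a, p a → p' a) :
    #(univ.filter p) ≤ #(univ.filter p') :=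
  card_le_card (monotone_filter_right _ fun a _ => h a)

lemma card_filter_add_one_le (h : ∀ a, p a → p' a) {a : α} (ha : p' a) (ha' : ¬ p a) :
    #(univ.filter p) + 1 ≤ #(univ.filter p') :=
  card_lt_card ⟨monotone_filter_right _ fun a _ => h a,
    fun hsub => ha' (mem_filter.mp (hsub (mem_filter.mpr ⟨mem_univ a, ha⟩))).2⟩

end Counting

section Volume

variable {ι : Type*}

lemma prod_sub_prod_le_card_mul (s : Finset ι) {a b : ι → ℝ} {ε : ℝ} (hb : ∀ i ∈ s, 0 ≤ b i)
    (hba : ∀ i ∈ s, b i ≤ a i) (ha : ∀ i ∈ s, a i ≤ 1) (hε : ∀ i ∈ s, a i - b i ≤ ε) :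
    ∏ i ∈ s, a i - ∏ i ∈ s, b i ≤ #s * ε := by
  induction s using Finset.induction_on with
  | empty => simp
  | insert i s hi ih =>
    simp only [mem_insert, forall_eq_or_imp] at hb hba ha hε
    rw [prod_insert hi, prod_insert hi, card_insert_of_notMem hi]
    have hB : 0 ≤ ∏ i ∈ s, b i := prod_nonneg hb.2
    have hBA : ∏ i ∈ s, b i ≤ ∏ i ∈ s, a i := prod_le_prod hb.2 hba.2
    have hA : ∏ i ∈ s, a i ≤ 1 := prod_le_one (fun j hj => (hb.2 j hj).trans (hba.2 j hj)) ha.2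
    have := ih hb.2 hba.2 ha.2 hε.2
    push_cast
    nlinarith [mul_le_mul_of_nonneg_left hA (sub_nonneg.mpr hba.1),
      mul_le_mul_of_nonneg_left (sub_nonneg.mpr hBA) hb.1]

lemma prod_update_sub_prod_update_le [Fintype ι] [DecidableEq ι] {q : ι → ℝ}
    (hq : ∀ j, q j ∈ Set.Icc (0:ℝ) 1) (k : ι) {a b : ℝ} (hab : a ≤ b) :
    ∏ j, Function.update q k b j - ∏ j, Function.update q k a j ≤ b - a := by
  rw [prod_update_of_mem (mem_univ k), prod_update_of_mem (mem_univ k), ← sub_mul]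
  exact mul_le_of_le_one_right (sub_nonneg.mpr hab)
    (prod_le_one (fun j _ => (hq j).1) fun j _ => (hq j).2)

lemma update_mem_Icc {ι : Type*} [DecidableEq ι] {q : ι → ℝ} (hq : ∀ j, q j ∈ Set.Icc (0:ℝ) 1)
    (k : ι) {c : ℝ} (hc : c ∈ Set.Icc (0:ℝ) 1) (j : ι) :
    Function.update q k c j ∈ Set.Icc (0:ℝ) 1 := by
  rw [Function.update_apply]
  split_ifs
  exacts [hc, hq j]

end Volume

section Discrepancy

variable {n d : ℕ} {P P' : Fin n → Fin d → ℝ} {q q' : Fin d → ℝ}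

lemma openCount_le_openCount (h : ∀ i, (∀ j, P i j < q j) → ∀ j, P' i j < q' j) :
    openCount P q ≤ openCount P' q' :=
  card_filter_le_card_filter h

lemma openCount_add_one_le (h : ∀ i, (∀ j, P i j < q j) → ∀ j, P' i j < q' j) {s : Fin n}
    (hs : ∀ j, P' s j < q' j) (hs' : ¬ ∀ j, P s j < q j) : openCount P q + 1 ≤ openCount P' q' :=
  card_filter_add_one_le h hs hs'

lemma closedCount_le_closedCount (h : ∀ i, (∀ j, P' i j ≤ q' j) → ∀ j, P i j ≤ q j) :
    closedCount P' q' ≤ closedCount P q :=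
  card_filter_le_card_filter h

lemma closedCount_add_one_le (h : ∀ i, (∀ j, P' i j ≤ q' j) → ∀ j, P i j ≤ q j) {s : Fin n}
    (hs : ∀ j, P s j ≤ q j) (hs' : ¬ ∀ j, P' s j ≤ q' j) :
    closedCount P' q' + 1 ≤ closedCount P q :=
  card_filter_add_one_le h hs hs'

lemma openDisc_le_openDisc_add_of_openCount_le (hcount : openCount P q ≤ openCount P' q') :
    openDisc P' q' ≤ openDisc P q + (∏ j, q' j - ∏ j, q j) := by
  have : (openCount P q : ℝ) / n ≤ openCount P' q' / n :=
    div_le_div_of_nonneg_right (by exact_mod_cast hcount) n.cast_nonneg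
  unfold openDisc
  linarith

lemma openDisc_le_openDisc_of_openCount_le (hcount : openCount P q ≤ openCount P' q) :
    openDisc P' q ≤ openDisc P q := by
  simpa using openDisc_le_openDisc_add_of_openCount_le hcount

lemma openDisc_le_openDisc_of_openCount_add_one_le (hcount : openCount P q + 1 ≤ openCount P' q')
    (hvol : ∏ j, q' j - ∏ j, q j ≤ 1 / n) : openDisc P' q' ≤ openDisc P q := by
  have : ((openCount P q : ℝ) + 1) / n ≤ openCount P' q' / n :=
    div_le_div_of_nonneg_right (by exact_mod_cast hcount) n.cast_nonneg
  rw [add_div] at this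
  unfold openDisc
  linarith

lemma closedDisc_le_closedDisc_add_of_closedCount_le
    (hcount : closedCount P' q' ≤ closedCount P q) :
    closedDisc P' q' ≤ closedDisc P q + (∏ j, q j - ∏ j, q' j) := by
  have : (closedCount P' q' : ℝ) / n ≤ closedCount P q / n :=
    div_le_div_of_nonneg_right (by exact_mod_cast hcount) n.cast_nonneg
  unfold closedDisc
  linarith

lemma closedDisc_le_closedDisc_of_closedCount_le (hcount : closedCount P' q ≤ closedCount P q) :
    closedDisc P' q ≤ closedDisc P q := by
  simpa using closedDisc_le_closedDisc_add_of_closedCount_le hcount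

lemma closedDisc_le_closedDisc_of_closedCount_add_one_le
    (hcount : closedCount P' q' + 1 ≤ closedCount P q) (hvol : ∏ j, q j - ∏ j, q' j ≤ 1 / n) :
    closedDisc P' q' ≤ closedDisc P q := by
  have : ((closedCount P' q' : ℝ) + 1) / n ≤ closedCount P q / n :=
    div_le_div_of_nonneg_right (by exact_mod_cast hcount) n.cast_nonneg
  rw [add_div] at this
  unfold closedDisc
  linarith

lemma openDisc_le_openDisc_of_le (h : ∀ i j, P' i j ≤ P i j) : openDisc P' q ≤ openDisc P q :=
  openDisc_le_openDisc_of_openCount_le <|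
    openCount_le_openCount fun i hi j => (h i j).trans_lt (hi j)

lemma closedDisc_le_closedDisc_of_le (h : ∀ i j, P i j ≤ P' i j) :
    closedDisc P' q ≤ closedDisc P q :=
  closedDisc_le_closedDisc_of_closedCount_le <|
    closedCount_le_closedCount fun i hi j => (h i j).trans (hi j)

lemma localDisc_le_one (P : Fin n → Fin d → ℝ) (hq : ∀ j, q j ∈ Set.Icc (0:ℝ) 1) :
    localDisc P q ≤ 1 := by
  have hcount : (closedCount P q : ℝ) / n ≤ 1 := div_le_one_of_le₀ (by
    exact_mod_cast (card_filter_le _ _).trans (card_univ.trans (Fintype.card_fin n)).le)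
    n.cast_nonneg
  have hvol : ∏ j, q j ≤ 1 := prod_le_one (fun j _ => (hq j).1) fun j _ => (hq j).2
  have hvol' : 0 ≤ ∏ j, q j := prod_nonneg fun j _ => (hq j).1
  have hcount' : 0 ≤ (openCount P q : ℝ) / n := by positivity
  exact max_le (by unfold openDisc; linarith) (by unfold closedDisc; linarith)

lemma localDisc_le_starDisc (P : Fin n → Fin d → ℝ) (hq : ∀ j, q j ∈ Set.Icc (0:ℝ) 1) :
    localDisc P q ≤ starDisc P :=
  le_csSup ⟨1, by rintro r ⟨q, hq, rfl⟩; exact localDisc_le_one P hq⟩ ⟨q, hq, rfl⟩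

lemma openDisc_le_starDisc (P : Fin n → Fin d → ℝ) (hq : ∀ j, q j ∈ Set.Icc (0:ℝ) 1) :
    openDisc P q ≤ starDisc P :=
  (le_max_left _ _).trans (localDisc_le_starDisc P hq)

lemma closedDisc_le_starDisc (P : Fin n → Fin d → ℝ) (hq : ∀ j, q j ∈ Set.Icc (0:ℝ) 1) :
    closedDisc P q ≤ starDisc P :=
  (le_max_right _ _).trans (localDisc_le_starDisc P hq)

lemma starDisc_le_of_forall {m : ℝ}
    (hopen : ∀ q : Fin d → ℝ, (∀ j, q j ∈ Set.Icc (0:ℝ) 1) → openDisc P q ≤ m)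
    (hclosed : ∀ q : Fin d → ℝ, (∀ j, q j ∈ Set.Icc (0:ℝ) 1) → closedDisc P q ≤ m) :
    starDisc P ≤ m := by
  refine csSup_le ⟨_, fun _ => 1, fun _ => ⟨zero_le_one, le_rfl⟩, rfl⟩ ?_
  rintro r ⟨q, hq, rfl⟩
  exact max_le (hopen q hq) (hclosed q hq)

end Discrepancy

section Continuity

variable {n d : ℕ} {P P' : Fin n → Fin d → ℝ} {ε : ℝ}

lemma openDisc_le_starDisc_add (hP : ∀ i j, P i j ∈ Set.Icc (0:ℝ) 1) (hε : 0 ≤ ε)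
    (hd : ∀ i j, |P' i j - P i j| ≤ ε) {q : Fin d → ℝ} (hq : ∀ j, q j ∈ Set.Icc (0:ℝ) 1) :
    openDisc P' q ≤ starDisc P + d * ε := by
  set q₀ : Fin d → ℝ := fun j => max (q j - ε) 0
  have hq₀ : ∀ j, q₀ j ∈ Set.Icc (0:ℝ) 1 := fun j =>
    ⟨le_max_right _ _, max_le (by linarith [(hq j).2]) zero_le_one⟩
  have hcount : openCount P q₀ ≤ openCount P' q := openCount_le_openCount fun i hi j => by
    rcases lt_max_iff.mp (hi j) with h | h
    · linarith [(abs_le.mp (hd i j)).2]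
    · linarith [(hP i j).1]
  have hvol : ∏ j, q j - ∏ j, q₀ j ≤ d * ε := by
    simpa using prod_sub_prod_le_card_mul univ (fun j _ => (hq₀ j).1)
      (fun j _ => max_le (by linarith) (hq j).1) (fun j _ => (hq j).2)
      (fun j _ => show q j - max (q j - ε) 0 ≤ ε by linarith [le_max_left (q j - ε) 0])
  linarith [openDisc_le_openDisc_add_of_openCount_le hcount, openDisc_le_starDisc P hq₀]

lemma closedDisc_le_starDisc_add (hP : ∀ i j, P i j ∈ Set.Icc (0:ℝ) 1) (hε : 0 ≤ ε)
    (hd : ∀ i j, |P' i j - P i j| ≤ ε) {q : Fin d → ℝ} (hq : ∀ j, q j ∈ Set.Icc (0:ℝ) 1) :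
    closedDisc P' q ≤ starDisc P + d * ε := by
  set q₁ : Fin d → ℝ := fun j => min (q j + ε) 1
  have hq₁ : ∀ j, q₁ j ∈ Set.Icc (0:ℝ) 1 := fun j =>
    ⟨le_min (by linarith [(hq j).1]) zero_le_one, min_le_right _ _⟩
  have hcount : closedCount P' q ≤ closedCount P q₁ := closedCount_le_closedCount fun i hi j =>
    le_min (by linarith [hi j, (abs_le.mp (hd i j)).1]) (hP i j).2
  have hvol : ∏ j, q₁ j - ∏ j, q j ≤ d * ε := by
    simpa using prod_sub_prod_le_card_mul univ (fun j _ => (hq j).1)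
      (fun j _ => le_min (by linarith) (hq j).2) (fun j _ => (hq₁ j).2)
      (fun j _ => show min (q j + ε) 1 - q j ≤ ε by linarith [min_le_left (q j + ε) 1])
  linarith [closedDisc_le_closedDisc_add_of_closedCount_le hcount, closedDisc_le_starDisc P hq₁]

lemma starDisc_le_starDisc_add (hP : ∀ i j, P i j ∈ Set.Icc (0:ℝ) 1) (hε : 0 ≤ ε)
    (hd : ∀ i j, |P' i j - P i j| ≤ ε) : starDisc P' ≤ starDisc P + d * ε :=
  starDisc_le_of_forall (fun _ hq => openDisc_le_starDisc_add hP hε hd hq)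
    (fun _ hq => closedDisc_le_starDisc_add hP hε hd hq)

def unitCubeTuples (n d : ℕ) : Set (Fin n → Fin d → ℝ) := {P | ∀ i j, P i j ∈ Set.Icc (0:ℝ) 1}

lemma isCompact_unitCubeTuples : IsCompact (unitCubeTuples n d) := by
  have : unitCubeTuples n d = Set.Icc 0 1 := by
    ext P
    simp [unitCubeTuples, Pi.le_def, forall_and]
  exact this ▸ isCompact_Icc

lemma lipschitzOnWith_starDisc :
    LipschitzOnWith d (starDisc (n := n) (d := d)) (unitCubeTuples n d) := by
  refine LipschitzOnWith.of_dist_le_mul fun P hP Q hQ => ?_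
  have hd : ∀ (P Q : Fin n → Fin d → ℝ) i j, |P i j - Q i j| ≤ dist P Q := fun P Q i j =>
    (dist_le_pi_dist (P i) (Q i) j).trans (dist_le_pi_dist P Q i)
  rw [Real.dist_eq, abs_le, NNReal.coe_natCast]
  constructor
  · linarith [dist_comm Q P ▸ starDisc_le_starDisc_add hP dist_nonneg (hd Q P)]
  · linarith [starDisc_le_starDisc_add hQ dist_nonneg (hd P Q)]

lemma exists_isMinOn_starDisc (n d : ℕ) :
    ∃ P ∈ unitCubeTuples n d, IsMinOn starDisc (unitCubeTuples n d) P :=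
  isCompact_unitCubeTuples.exists_isMinOn ⟨0, fun _ _ => ⟨le_rfl, zero_le_one⟩⟩
    lipschitzOnWith_starDisc.continuousOn

end Continuity

section Moves

variable {n d : ℕ}

def moveCoord (P : Fin n → Fin d → ℝ) (r : Fin n) (k : Fin d) (v : ℝ) : Fin n → Fin d → ℝ :=
  Function.update P r (Function.update (P r) k v)

variable {P : Fin n → Fin d → ℝ} {r s : Fin n} {k : Fin d} {v : ℝ}

lemma moveCoord_apply (i : Fin n) (j : Fin d) :
    moveCoord P r k v i j = if i = r ∧ j = k then v else P i j := by
  by_cases hi : i = r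
  · subst hi
    by_cases hj : j = k <;> simp [moveCoord, hj]
  · simp [moveCoord, hi]

@[simp]
lemma moveCoord_self : moveCoord P r k v r k = v := by
  simp [moveCoord_apply]

lemma moveCoord_of_ne_left {i : Fin n} (hi : i ≠ r) (j : Fin d) :
    moveCoord P r k v i j = P i j := by
  simp [moveCoord_apply, hi]

lemma moveCoord_of_ne_right (i : Fin n) {j : Fin d} (hj : j ≠ k) :
    moveCoord P r k v i j = P i j := by
  simp [moveCoord_apply, hj]

lemma moveCoord_mem_unitCubeTuples (hP : P ∈ unitCubeTuples n d) (hv : v ∈ Set.Icc (0:ℝ) 1) :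
    moveCoord P r k v ∈ unitCubeTuples n d := by
  intro i j
  rw [moveCoord_apply]
  split_ifs
  exacts [hv, hP i j]

lemma le_moveCoord (h : P r k ≤ v) (i : Fin n) (j : Fin d) : P i j ≤ moveCoord P r k v i j := by
  rw [moveCoord_apply]
  split_ifs with hij
  exacts [hij.1 ▸ hij.2 ▸ h, le_rfl]

lemma moveCoord_le (h : v ≤ P r k) (i : Fin n) (j : Fin d) : moveCoord P r k v i j ≤ P i j := by
  rw [moveCoord_apply]
  split_ifs with hij
  exacts [hij.1 ▸ hij.2 ▸ h, le_rfl]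

/-- Moving the tied point `r` to the right can only remove it from open boxes `[0,q)` with
`P r k < q k ≤ v`; in that case `s` enters the box instead, compared with the box cut at `P r k`. -/
lemma openDisc_moveCoord_le_of_le {q : Fin d → ℝ} (hq : ∀ j, q j ∈ Set.Icc (0:ℝ) 1)
    (hr : 0 ≤ P r k) (hv : v ≤ P r k + 1 / n) (hsr : s ≠ r) (htie : P s k = P r k)
    (hdom : ∀ j ≠ k, P s j ≤ P r j) : openDisc (moveCoord P r k v) q ≤ starDisc P := by
  by_cases hstay : (∀ j, P r j < q j) → ∀ j, moveCoord P r k v r j < q j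
  · have hcount : openCount P q ≤ openCount (moveCoord P r k v) q :=
      openCount_le_openCount fun i hi => by
        by_cases hir : i = r
        · exact hir ▸ hstay (hir ▸ hi)
        · simpa [moveCoord_of_ne_left hir] using hi
    exact (openDisc_le_openDisc_of_openCount_le hcount).trans (openDisc_le_starDisc P hq)
  push Not at hstay
  obtain ⟨hin, j, hout⟩ := hstay
  have hj : j = k := by
    by_contra hjk
    exact (hin j).not_ge (by simpa [moveCoord_of_ne_right r hjk] using hout)
  rw [hj, moveCoord_self] at hout
  set q' := Function.update q k (P r k)
  have hq' : ∀ i, q' i ∈ Set.Icc (0:ℝ) 1 := update_mem_Icc hq k ⟨hr, (hin k).le.trans (hq k).2⟩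
  have hcount : openCount P q' + 1 ≤ openCount (moveCoord P r k v) q := by
    refine openCount_add_one_le (s := s) (fun i hi l => ?_) (fun l => ?_) (fun hs => ?_)
    · have hir : i ≠ r := fun h => by simpa [q', h] using hi k
      rw [moveCoord_of_ne_left hir]
      by_cases hl : l = k
      · rw [hl]
        exact (by simpa [q'] using hi k : P i k < P r k).trans (hin k)
      · simpa [q', hl] using hi l
    · rw [moveCoord_of_ne_left hsr]
      by_cases hl : l = k
      · rw [hl, htie]
        exact hin k
      · exact (hdom l hl).trans_lt (hin l)
    · simpa [q', htie] using hs k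
  have hvol : ∏ i, q i - ∏ i, q' i ≤ 1 / n := by
    have := prod_update_sub_prod_update_le hq k (hin k).le
    rw [Function.update_eq_self] at this
    linarith
  exact (openDisc_le_openDisc_of_openCount_add_one_le hcount hvol).trans
    (openDisc_le_starDisc P hq')

/-- Moving `r` to the left can only add it to closed boxes `[0,q]` with `v ≤ q k < P r k`; in
that case `s` leaves the box, compared with the box stretched to `P r k`. -/
lemma closedDisc_moveCoord_le_of_ge {q : Fin d → ℝ} (hq : ∀ j, q j ∈ Set.Icc (0:ℝ) 1)
    (hr : P r k ≤ 1) (hv : P r k - 1 / n ≤ v) (hsr : s ≠ r) (htie : P s k = P r k)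
    (hdom : ∀ j ≠ k, P s j ≤ P r j) : closedDisc (moveCoord P r k v) q ≤ starDisc P := by
  by_cases hstay : (∀ j, moveCoord P r k v r j ≤ q j) → ∀ j, P r j ≤ q j
  · have hcount : closedCount (moveCoord P r k v) q ≤ closedCount P q :=
      closedCount_le_closedCount fun i hi => by
        by_cases hir : i = r
        · exact hir ▸ hstay (hir ▸ hi)
        · simpa [moveCoord_of_ne_left hir] using hi
    exact (closedDisc_le_closedDisc_of_closedCount_le hcount).trans (closedDisc_le_starDisc P hq)
  push Not at hstay
  obtain ⟨hin, j, hout⟩ := hstay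
  have hj : j = k := by
    by_contra hjk
    exact hout.not_ge (by simpa [moveCoord_of_ne_right r hjk] using hin j)
  rw [hj] at hout
  have hvq : v ≤ q k := by simpa using hin k
  set q' := Function.update q k (P r k)
  have hq' : ∀ i, q' i ∈ Set.Icc (0:ℝ) 1 := update_mem_Icc hq k ⟨(hq k).1.trans hout.le, hr⟩
  have hcount : closedCount (moveCoord P r k v) q + 1 ≤ closedCount P q' := by
    refine closedCount_add_one_le (s := s) (fun i hi l => ?_) (fun l => ?_) (fun hs => ?_)
    · by_cases hl : l = k
      · rw [hl]
        simp only [q', Function.update_self]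
        by_cases hir : i = r
        · rw [hir]
        · exact (by simpa [moveCoord_of_ne_left hir] using hi k : P i k ≤ q k).trans hout.le
      · simpa [q', hl, moveCoord_of_ne_right i hl] using hi l
    · by_cases hl : l = k
      · simp [q', hl, htie]
      · simpa [q', hl] using (hdom l hl).trans (by simpa [moveCoord_of_ne_right r hl] using hin l)
    · exact hout.not_ge (by simpa [moveCoord_of_ne_left hsr, htie] using hs k)
  have hvol : ∏ i, q' i - ∏ i, q i ≤ 1 / n := by
    have := prod_update_sub_prod_update_le hq k hout.le
    rw [Function.update_eq_self] at this
    linarith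
  exact (closedDisc_le_closedDisc_of_closedCount_add_one_le hcount hvol).trans
    (closedDisc_le_starDisc P hq')

lemma starDisc_moveCoord_le (hr : P r k ∈ Set.Icc (0:ℝ) 1) (hv : |v - P r k| ≤ 1 / n)
    (hsr : s ≠ r) (htie : P s k = P r k) (hdom : ∀ j ≠ k, P s j ≤ P r j) :
    starDisc (moveCoord P r k v) ≤ starDisc P := by
  obtain ⟨hv₁, hv₂⟩ := abs_sub_le_iff.mp hv
  rcases le_total (P r k) v with h | h
  · exact starDisc_le_of_forall
      (fun _ hq => openDisc_moveCoord_le_of_le hq hr.1 (by linarith) hsr htie hdom)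
      (fun _ hq => (closedDisc_le_closedDisc_of_le (le_moveCoord h)).trans
        (closedDisc_le_starDisc P hq))
  · exact starDisc_le_of_forall
      (fun _ hq => (openDisc_le_openDisc_of_le (moveCoord_le h)).trans (openDisc_le_starDisc P hq))
      (fun _ hq => closedDisc_moveCoord_le_of_ge hq hr.2 (by linarith) hsr htie hdom)

end Moves

section TieBreaking

lemma card_image_update_of_notMem {α β : Type*} [Fintype α] [DecidableEq α] [DecidableEq β]
    {f : α → β} {r s : α} {v : β} (hsr : s ≠ r) (htie : f s = f r) (hv : v ∉ univ.image f) :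
    #(univ.image (Function.update f r v)) = #(univ.image f) + 1 := by
  rw [← card_insert_of_notMem hv]
  congr 1
  ext x
  simp only [mem_image, mem_univ, true_and, mem_insert]
  constructor
  · rintro ⟨i, rfl⟩
    by_cases hi : i = r
    · simp [hi]
    · exact Or.inr ⟨i, by simp [hi]⟩
  · rintro (rfl | ⟨i, rfl⟩)
    · exact ⟨r, by simp⟩
    · by_cases hi : i = r
      · exact ⟨s, by simp [hsr, htie, hi]⟩
      · exact ⟨i, by simp [hi]⟩

variable {n d : ℕ}

def coordValueCount (P : Fin n → Fin d → ℝ) : ℕ :=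
  ∑ k, #(univ.image fun i => P i k)

lemma coordValueCount_le (P : Fin n → Fin d → ℝ) : coordValueCount P ≤ d * n := by
  calc coordValueCount P ≤ ∑ _k : Fin d, n :=
        sum_le_sum fun k _ => card_image_le.trans (card_fin n).le
    _ = d * n := by simp

lemma coordValueCount_moveCoord {P : Fin n → Fin d → ℝ} {r s : Fin n} {k : Fin d} {v : ℝ}
    (hsr : s ≠ r) (htie : P s k = P r k) (hv : v ∉ univ.image fun i => P i k) :
    coordValueCount (moveCoord P r k v) = coordValueCount P + 1 := by
  have hcoord : ∀ j, #(univ.image fun i => moveCoord P r k v i j) =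
      #(univ.image fun i => P i j) + if j = k then 1 else 0 := by
    intro j
    by_cases hj : j = k
    · subst hj
      have : (fun i => moveCoord P r j v i j) = Function.update (fun i => P i j) r v := by
        ext i
        by_cases hi : i = r <;> simp [moveCoord_apply, hi]
      simpa [this] using card_image_update_of_notMem hsr htie hv
    · simp [moveCoord_of_ne_right _ hj, hj]
  simp [coordValueCount, hcoord, sum_add_distrib]

lemma le_total_of_ne_fin_two (x y : Fin 2 → ℝ) (k : Fin 2) :
    (∀ j ≠ k, x j ≤ y j) ∨ (∀ j ≠ k, y j ≤ x j) := by
  have hrev : ∀ k j : Fin 2, j ≠ k → j = k.rev := by decide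
  rcases le_total (x k.rev) (y k.rev) with h | h
  · exact .inl fun j hj => hrev k j hj ▸ h
  · exact .inr fun j hj => hrev k j hj ▸ h

lemma exists_starDisc_le_coordValueCount_lt {n : ℕ} {P : Fin n → Fin 2 → ℝ}
    (hP : P ∈ unitCubeTuples n 2) {a b : Fin n} {k : Fin 2} (hab : a ≠ b)
    (htie : P a k = P b k) :
    ∃ P' ∈ unitCubeTuples n 2, starDisc P' ≤ starDisc P ∧
      coordValueCount P < coordValueCount P' := by
  obtain ⟨r, s, hsr, hsk, hdom⟩ : ∃ r s, s ≠ r ∧ P s k = P r k ∧ ∀ j ≠ k, P s j ≤ P r j := by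
    rcases le_total_of_ne_fin_two (P a) (P b) k with h | h
    exacts [⟨b, a, hab, htie, h⟩, ⟨a, b, hab.symm, htie.symm, h⟩]
  have hn : (0 : ℝ) < 1 / n := by
    have := a.pos
    positivity
  have hI : max 0 (P r k - 1 / n) < min 1 (P r k + 1 / n) := by
    simp only [max_lt_iff, lt_min_iff]
    refine ⟨⟨?_, ?_⟩, ?_, ?_⟩ <;> linarith [(hP r k).1, (hP r k).2]
  obtain ⟨v, ⟨hv₁, hv₂⟩, hv⟩ :=
    (Set.Icc_infinite hI).exists_notMem_finset (univ.image fun i => P i k)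
  refine ⟨moveCoord P r k v,
    moveCoord_mem_unitCubeTuples hP ⟨le_of_max_le_left hv₁, le_of_le_min_left hv₂⟩,
    starDisc_moveCoord_le (hP r k) ?_ hsr hsk hdom,
    by rw [coordValueCount_moveCoord hsr hsk hv]; omega⟩
  rw [abs_sub_le_iff]
  constructor <;> linarith [le_of_max_le_right hv₁, le_of_le_min_right hv₂]

end TieBreaking

lemma exists_isMinOn_starDisc_max_coordValueCount (n d : ℕ) :
    ∃ P ∈ unitCubeTuples n d, IsMinOn starDisc (unitCubeTuples n d) P ∧
      ∀ Q ∈ unitCubeTuples n d, IsMinOn starDisc (unitCubeTuples n d) Q →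
        coordValueCount Q ≤ coordValueCount P := by
  set S := {P | P ∈ unitCubeTuples n d ∧ IsMinOn starDisc (unitCubeTuples n d) P}
  obtain ⟨P₀, hP₀⟩ := exists_isMinOn_starDisc n d
  have hbdd : BddAbove (coordValueCount '' S) :=
    ⟨d * n, by rintro _ ⟨P, _, rfl⟩; exact coordValueCount_le P⟩
  obtain ⟨P, ⟨hP, hmin⟩, hmax⟩ :=
    Nat.sSup_mem (s := coordValueCount '' S) ⟨_, P₀, hP₀, rfl⟩ hbdd
  exact ⟨P, hP, hmin, fun Q hQ hQmin => hmax ▸ le_csSup hbdd ⟨Q, ⟨hQ, hQmin⟩, rfl⟩⟩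

lemma injective_coord_of_max_coordValueCount {n : ℕ} {P : Fin n → Fin 2 → ℝ}
    (hP : P ∈ unitCubeTuples n 2) (hmin : IsMinOn starDisc (unitCubeTuples n 2) P)
    (hmax : ∀ Q ∈ unitCubeTuples n 2, IsMinOn starDisc (unitCubeTuples n 2) Q →
      coordValueCount Q ≤ coordValueCount P) (k : Fin 2) :
    Function.Injective fun i => P i k := by
  by_contra hk
  obtain ⟨a, b, htie, hab⟩ := Function.not_injective_iff.mp hk
  obtain ⟨P', hP', hle, hlt⟩ := exists_starDisc_le_coordValueCount_lt hP hab htie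
  exact (hmax P' hP' fun Q hQ => hle.trans (hmin hQ)).not_gt hlt

theorem stmt_10_general (n : ℕ) :
    ∃ P : Fin n → Fin 2 → ℝ, (∀ i j, P i j ∈ Set.Icc (0:ℝ) 1) ∧
      (∀ Q : Fin n → Fin 2 → ℝ, (∀ i j, Q i j ∈ Set.Icc (0:ℝ) 1) → starDisc P ≤ starDisc Q) ∧
      Function.Injective (fun i => P i 0) ∧ Function.Injective (fun i => P i 1) := by
  obtain ⟨P, hP, hmin, hmax⟩ := exists_isMinOn_starDisc_max_coordValueCount n 2
  exact ⟨P, hP, fun Q hQ => hmin hQ, injective_coord_of_max_coordValueCount hP hmin hmax 0,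
    injective_coord_of_max_coordValueCount hP hmin hmax 1⟩

/-- For every `n ≥ 1` there is an optimal `n`-point tuple in `[0,1]²` in which
no two distinct points share a coordinate value in any dimension. -/
theorem stmt_10 (n : ℕ) (hn : 1 ≤ n) :
    ∃ P : Fin n → Fin 2 → ℝ, (∀ i j, P i j ∈ Set.Icc (0:ℝ) 1) ∧
      (∀ Q : Fin n → Fin 2 → ℝ, (∀ i j, Q i j ∈ Set.Icc (0:ℝ) 1) → starDisc P ≤ starDisc Q) ∧
      Function.Injective (fun i => P i 0) ∧ Function.Injective (fun i => P i 1) :=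
  stmt_10_general n
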